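/- Let H be a balanced complete bipartite graph whose edges are coloured red and blue. Then either H is spanned by two vertex-disjoint monochromatic connected matchings, one of each colour, or the colouring is split and H is spanned both by one red and two blue vertex-disjoint monochromatic connected matchings, and by one blue and two red vertex-disjoint monochromatic connected matchings. (Matchings may be empty; the empty graph, a single vertex and a single edge count as matchings.) -/

import Mathlib

open SimpleGraph

/-- The simple graph on `α ⊕ β` whose edges are the colour-`c` edges of the
(not necessarily proper) edge-colouring `χ` of the complete bipartite graph
with biparts `α` and `β`. -/
def colourGraph {α β : Type} {r : ℕ} (χ : α → β → Fin r) (c : Fin r) :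
    SimpleGraph (α ⊕ β) where
  Adj x y := ∃ a b, χ a b = c ∧
    ((x = Sum.inl a ∧ y = Sum.inr b) ∨ (x = Sum.inr b ∧ y = Sum.inl a))
  symm := by
    constructor
    rintro x y ⟨a, b, hc, h | h⟩
    · exact ⟨a, b, hc, Or.inr ⟨h.2, h.1⟩⟩
    · exact ⟨a, b, hc, Or.inl ⟨h.2, h.1⟩⟩
  loopless := by
    constructor
    rintro x ⟨a, b, hc, ⟨h1, h2⟩ | ⟨h1, h2⟩⟩ <;> simp_all

/-- A monochromatic component is non-trivial if it meets both biparts. -/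
def Nontriv {α β : Type} {r : ℕ} (χ : α → β → Fin r) (c : Fin r)
    (K : (colourGraph χ c).ConnectedComponent) : Prop :=
  (∃ a : α, Sum.inl a ∈ K.supp) ∧ (∃ b : β, Sum.inr b ∈ K.supp)

/-- A monochromatic connected matching in an `r`-edge-coloured `K_{n,n}`:
a matching all of whose edges have colour `colour` and lie in a single
monochromatic component. A single vertex (field `single`, allowed only when
there are no edges) and the empty graph count as degenerate matchings. -/
structure CMatching (n r : ℕ) (χ : Fin n → Fin n → Fin r) where
  colour : Fin r
  pairs : Finset (Fin n × Fin n)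
  mono : ∀ p ∈ pairs, χ p.1 p.2 = colour
  inj1 : ∀ p ∈ pairs, ∀ q ∈ pairs, p.1 = q.1 → p = q
  inj2 : ∀ p ∈ pairs, ∀ q ∈ pairs, p.2 = q.2 → p = q
  conn : ∀ p ∈ pairs, ∀ q ∈ pairs,
    (colourGraph χ colour).Reachable (Sum.inl p.1) (Sum.inl q.1)
  single : Option (Fin n ⊕ Fin n)
  hsingle : single = none ∨ pairs = ∅

/-- The vertex set covered by a monochromatic connected matching. -/
def CMatching.verts {n r : ℕ} {χ : Fin n → Fin n → Fin r} (M : CMatching n r χ) :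
    Set (Fin n ⊕ Fin n) :=
  {x | (∃ p ∈ M.pairs, x = Sum.inl p.1 ∨ x = Sum.inr p.2) ∨ x ∈ M.single}

/-- `V(K_{n,n})` can be partitioned into at most five monochromatic connected
matchings. -/
def FiveMatchingPartition {n r : ℕ} (χ : Fin n → Fin n → Fin r) : Prop :=
  ∃ M : Fin 5 → CMatching n r χ,
    (∀ i j, i ≠ j → Disjoint (M i).verts (M j).verts) ∧
    (⋃ i, (M i).verts) = Set.univ

/-- A 2-edge-colouring of `K_{n,n}` is split if all monochromatic components
are non-trivial and each colour has exactly two monochromatic components. -/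
def IsSplit {n : ℕ} (χ : Fin n → Fin n → Fin 2) : Prop :=
  (∀ (c : Fin 2) (K : (colourGraph χ c).ConnectedComponent), Nontriv χ c K) ∧
  (∀ c : Fin 2, Nat.card ((colourGraph χ c).ConnectedComponent) = 2)

/-! If a maximum red matching lies in a single red component, maximality forces every edge
between the vertices it misses to be blue; these form a balanced complete blue bipartite graph,
so a blue connected matching covers them. The same holds with the colours exchanged.

Otherwise there are red edges `a₁b₁`, `a₂b₂` in different red components, so `a₁b₂` and `a₂b₁`
are blue and every vertex is joined in blue to `a₁` or `a₂`. As a maximum blue matching is not in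
one blue component either, `a₁` and `a₂` lie in different blue components, and an edge is blue
exactly when its ends are on the same side of the blue component of `a₁`. Such a colouring is
split, and a count of the four sides of the partition yields the three matchings. -/

open Finset Sum

variable {α β : Type} {r n : ℕ}

lemma fin_two_eq_or_eq {c c' : Fin 2} (hc : c' ≠ c) (x : Fin 2) : x = c ∨ x = c' := by
  omega

theorem SimpleGraph.Reachable.mem_iff {V : Type} {G : SimpleGraph V} {S : Set V}
    (hS : ∀ ⦃x y⦄, G.Adj x y → (x ∈ S ↔ y ∈ S)) {x y : V} (h : G.Reachable x y) :
    x ∈ S ↔ y ∈ S := by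
  obtain ⟨w⟩ := h
  induction w with
  | nil => rfl
  | cons hadj _ ih => exact (hS hadj).trans ih

lemma Set.disjoint_sumEquiv_symm_coe {s s' : Finset α} {t t' : Finset β} :
    Disjoint (Set.sumEquiv.symm ((s : Set α), (t : Set β)))
        (Set.sumEquiv.symm ((s' : Set α), (t' : Set β))) ↔
      Disjoint s s' ∧ Disjoint t t' := by
  rw [disjoint_map_orderIso_iff, Prod.disjoint_iff]
  simp only [Finset.disjoint_coe]

lemma Set.sumEquiv_symm_union (s s' : Set α) (t t' : Set β) :
    Set.sumEquiv.symm (s, t) ∪ Set.sumEquiv.symm (s', t') = Set.sumEquiv.symm (s ∪ s', t ∪ t') :=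
  (map_sup Set.sumEquiv.symm (s, t) (s', t')).symm

lemma Set.sumEquiv_symm_univ : Set.sumEquiv.symm (Set.univ, Set.univ) = (Set.univ : Set (α ⊕ β)) :=
  map_top Set.sumEquiv.symm

@[simp]
lemma Set.inl_mem_sumEquiv_symm {a : α} {s : Set α} {t : Set β} :
    inl a ∈ Set.sumEquiv.symm (s, t) ↔ a ∈ s := by
  simp

@[simp]
lemma Set.inr_mem_sumEquiv_symm {b : β} {s : Set α} {t : Set β} :
    inr b ∈ Set.sumEquiv.symm (s, t) ↔ b ∈ t := by
  simp

section ColourGraph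

variable {χ : α → β → Fin r} {c : Fin r}

lemma colourGraph_adj_inl_inr {a : α} {b : β} (h : χ a b = c) :
    (colourGraph χ c).Adj (inl a) (inr b) :=
  ⟨a, b, h, Or.inl ⟨rfl, rfl⟩⟩

lemma colourGraph_reachable_inl_inl {a a' : α} {b : β} (h : χ a b = c) (h' : χ a' b = c) :
    (colourGraph χ c).Reachable (inl a) (inl a') :=
  (colourGraph_adj_inl_inr h).reachable.trans (colourGraph_adj_inl_inr h').reachable.symm

end ColourGraph

section Matching

def IsColourMatching (χ : α → β → Fin r) (c : Fin r) (P : Finset (α × β)) : Prop :=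
  (∀ p ∈ P, χ p.1 p.2 = c) ∧ Set.InjOn Prod.fst (P : Set (α × β)) ∧
    Set.InjOn Prod.snd (P : Set (α × β))

lemma exists_isColourMatching_forall_card_le [Fintype α] [Fintype β] (χ : α → β → Fin r)
    (c : Fin r) :
    ∃ P, IsColourMatching χ c P ∧ ∀ Q, IsColourMatching χ c Q → #Q ≤ #P := by
  classical
  obtain ⟨P, hP, hmax⟩ := exists_max_image ({Q | IsColourMatching χ c Q} : Finset _) card
    ⟨∅, by simp [IsColourMatching]⟩
  simp only [mem_filter, mem_univ, true_and] at hP hmax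
  exact ⟨P, hP, hmax⟩

variable {χ : α → β → Fin r} {c : Fin r}

lemma IsColourMatching.insert [DecidableEq α] [DecidableEq β] {P : Finset (α × β)}
    (hP : IsColourMatching χ c P) {a : α} {b : β} (hab : χ a b = c)
    (ha : a ∉ P.image Prod.fst) (hb : b ∉ P.image Prod.snd) :
    IsColourMatching χ c (insert (a, b) P) := by
  have hab' : (a, b) ∉ (P : Set (α × β)) := fun h => ha (mem_image_of_mem _ h)
  refine ⟨(forall_mem_insert _ _ _).2 ⟨hab, hP.1⟩, ?_, ?_⟩
  · rw [coe_insert, Set.injOn_insert hab', ← coe_image]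
    exact ⟨hP.2.1, ha⟩
  · rw [coe_insert, Set.injOn_insert hab', ← coe_image]
    exact ⟨hP.2.2, hb⟩

lemma IsColourMatching.colour_ne_of_forall_card_le [DecidableEq α] [DecidableEq β]
    {P : Finset (α × β)} (hP : IsColourMatching χ c P)
    (hmax : ∀ Q, IsColourMatching χ c Q → #Q ≤ #P) {a : α} {b : β}
    (ha : a ∉ P.image Prod.fst) (hb : b ∉ P.image Prod.snd) : χ a b ≠ c := by
  intro hab
  have hcard := hmax _ (hP.insert hab ha hb)
  rw [card_insert_of_notMem fun h => ha (mem_image_of_mem _ h)] at hcard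
  omega

lemma exists_isColourMatching_image_eq [DecidableEq α] [DecidableEq β] {s : Finset α}
    {t : Finset β} (hst : #s = #t) (hc : ∀ a ∈ s, ∀ b ∈ t, χ a b = c) :
    ∃ P, IsColourMatching χ c P ∧ P.image Prod.fst = s ∧ P.image Prod.snd = t := by
  let e := equivOfCardEq hst
  refine ⟨s.attach.image fun a => (a.1, (e a).1), ⟨?_, ?_, ?_⟩, ?_, ?_⟩
  · simp only [mem_image, mem_attach, true_and, forall_exists_index]
    rintro _ a rfl
    exact hc a a.2 _ (e a).2
  · rw [coe_image]
    rintro _ ⟨a, -, rfl⟩ _ ⟨a', -, rfl⟩ h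
    rw [Subtype.ext h]
  · rw [coe_image]
    rintro _ ⟨a, -, rfl⟩ _ ⟨a', -, rfl⟩ h
    rw [e.injective (Subtype.ext h)]
  · rw [image_image]
    exact attach_image_val
  · ext b
    rw [image_image, mem_image]
    refine ⟨?_, fun hb => ⟨e.symm ⟨b, hb⟩, mem_attach _ _, by simp⟩⟩
    rintro ⟨a, -, rfl⟩
    exact (e a).2

end Matching

section CMatching

variable {χ : Fin n → Fin n → Fin r} {c : Fin r}

def CMatching.ofPairs {P : Finset (Fin n × Fin n)}
    (hP : IsColourMatching χ c P)
    (hconn : ∀ p ∈ P, ∀ q ∈ P, (colourGraph χ c).Reachable (inl p.1) (inl q.1)) :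
    CMatching n r χ :=
  ⟨c, P, hP.1, hP.2.1, hP.2.2, hconn, none, Or.inl rfl⟩

lemma CMatching.verts_ofPairs {P : Finset (Fin n × Fin n)} (hP : IsColourMatching χ c P)
    (hconn : ∀ p ∈ P, ∀ q ∈ P, (colourGraph χ c).Reachable (inl p.1) (inl q.1)) :
    (CMatching.ofPairs hP hconn).verts =
      Set.sumEquiv.symm (↑(P.image Prod.fst), ↑(P.image Prod.snd)) := by
  ext (a | b) <;> simp [CMatching.ofPairs, CMatching.verts, eq_comm]

lemma exists_cMatching_of_card_eq {s t : Finset (Fin n)} (hst : #s = #t)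
    (hc : ∀ a ∈ s, ∀ b ∈ t, χ a b = c) :
    ∃ M : CMatching n r χ, M.colour = c ∧ M.verts = Set.sumEquiv.symm (↑s, ↑t) := by
  obtain ⟨P, hP, hs, ht⟩ := exists_isColourMatching_image_eq hst hc
  have hconn : ∀ p ∈ P, ∀ q ∈ P, (colourGraph χ c).Reachable (inl p.1) (inl q.1) := by
    intro p hp q hq
    have hp₁ : p.1 ∈ s := hs ▸ mem_image_of_mem _ hp
    have hp₂ : p.2 ∈ t := ht ▸ mem_image_of_mem _ hp
    have hq₁ : q.1 ∈ s := hs ▸ mem_image_of_mem _ hq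
    exact colourGraph_reachable_inl_inl (hP.1 p hp) (hc _ hq₁ _ hp₂)
  exact ⟨.ofPairs hP hconn, rfl, by rw [CMatching.verts_ofPairs, hs, ht]⟩

end CMatching

section Split

def IsSplitBy (χ : α → β → Fin r) (c : Fin r) (SA : Set α) (SB : Set β) : Prop :=
  ∀ a b, χ a b = c ↔ (a ∈ SA ↔ b ∈ SB)

variable {χ : α → β → Fin r} {c : Fin r} {SA : Set α} {SB : Set β}
  {a a' : α} {b b' : β}

lemma IsSplitBy.compl (h : IsSplitBy χ c SA SB) : IsSplitBy χ c SAᶜ SBᶜ :=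
  fun a b => (h a b).trans not_iff_not.symm

lemma IsSplitBy.reachable_iff (h : IsSplitBy χ c SA SB) (ha : a ∈ SA) (ha' : a' ∉ SA)
    (hb : b ∈ SB) (hb' : b' ∉ SB) (x y : α ⊕ β) :
    (colourGraph χ c).Reachable x y ↔
      (x ∈ Set.sumEquiv.symm (SA, SB) ↔ y ∈ Set.sumEquiv.symm (SA, SB)) := by
  have hedge : ∀ a b, (a ∈ SA ↔ b ∈ SB) → (colourGraph χ c).Reachable (inl a) (inr b) :=
    fun a b hab => (colourGraph_adj_inl_inr ((h a b).2 hab)).reachable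
  refine ⟨Reachable.mem_iff ?_, ?_⟩
  · rintro _ _ ⟨a, b, hab, ⟨rfl, rfl⟩ | ⟨rfl, rfl⟩⟩
    · simpa using (h a b).1 hab
    · simpa using ((h a b).1 hab).symm
  rcases x with a₁ | b₁ <;> rcases y with a₂ | b₂ <;>
    simp only [Set.inl_mem_sumEquiv_symm, Set.inr_mem_sumEquiv_symm] <;> intro hxy
  · by_cases ha₁ : a₁ ∈ SA
    · exact (hedge a₁ b (by tauto)).trans (hedge a₂ b (by tauto)).symm
    · exact (hedge a₁ b' (by tauto)).trans (hedge a₂ b' (by tauto)).symm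
  · exact hedge a₁ b₂ hxy
  · exact (hedge a₂ b₁ hxy.symm).symm
  · by_cases hb₁ : b₁ ∈ SB
    · exact (hedge a b₁ (by tauto)).symm.trans (hedge a b₂ (by tauto))
    · exact (hedge a' b₁ (by tauto)).symm.trans (hedge a' b₂ (by tauto))

lemma IsSplitBy.nontriv (h : IsSplitBy χ c SA SB) (ha : a ∈ SA) (ha' : a' ∉ SA)
    (hb : b ∈ SB) (hb' : b' ∉ SB) (K : (colourGraph χ c).ConnectedComponent) :
    Nontriv χ c K := by
  induction K using ConnectedComponent.ind with | h v => ?_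
  have hreach := h.reachable_iff ha ha' hb hb'
  simp only [Nontriv, ConnectedComponent.mem_supp_iff, ConnectedComponent.eq, hreach,
    Set.inl_mem_sumEquiv_symm, Set.inr_mem_sumEquiv_symm]
  by_cases hv : v ∈ Set.sumEquiv.symm (SA, SB)
  · exact ⟨⟨a, iff_of_true ha hv⟩, ⟨b, iff_of_true hb hv⟩⟩
  · exact ⟨⟨a', iff_of_false ha' hv⟩, ⟨b', iff_of_false hb' hv⟩⟩

lemma IsSplitBy.card_connectedComponent (h : IsSplitBy χ c SA SB) (ha : a ∈ SA)
    (ha' : a' ∉ SA) (hb : b ∈ SB) (hb' : b' ∉ SB) :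
    Nat.card (colourGraph χ c).ConnectedComponent = 2 := by
  have hreach := h.reachable_iff ha ha' hb hb'
  rw [Nat.card_eq_two_iff]
  refine ⟨(colourGraph χ c).connectedComponentMk (inl a),
    (colourGraph χ c).connectedComponentMk (inl a'), ?_, ?_⟩
  · simp [ConnectedComponent.eq, hreach, ha, ha']
  · refine Set.eq_univ_of_forall (ConnectedComponent.ind fun v => ?_)
    simp only [Set.mem_insert_iff, Set.mem_singleton_iff, ConnectedComponent.eq, hreach,
      Set.inl_mem_sumEquiv_symm, ha, ha']
    tauto

end Split

section TwoColours

variable {χ : α → β → Fin 2} {c c' : Fin 2} {a₁ a₂ : α} {b₁ b₂ : β}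

lemma IsSplitBy.compl_right {SA : Set α} {SB : Set β} (h : IsSplitBy χ c SA SB)
    (hc : c' ≠ c) : IsSplitBy χ c' SA SBᶜ := by
  intro a b
  have hab := h a b
  rcases fin_two_eq_or_eq hc (χ a b) with hχ | hχ <;>
    simp only [hχ, hc, hc.symm, true_iff, false_iff, Set.mem_compl_iff] at hab ⊢ <;> tauto

lemma colour_eq_of_not_reachable (hc : c' ≠ c) (h₂ : χ a₂ b₂ = c)
    (hr : ¬ (colourGraph χ c).Reachable (inl a₁) (inl a₂)) : χ a₁ b₂ = c' :=
  (fin_two_eq_or_eq hc _).resolve_left fun h => hr (colourGraph_reachable_inl_inl h h₂)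

/-- Every vertex is joined in colour `c'` to `a₁` (through `b₂`) or to `a₂` (through `b₁`). -/
lemma preconnected_of_reachable (hc : c' ≠ c) (h₁ : χ a₁ b₁ = c) (h₂ : χ a₂ b₂ = c)
    (hr : ¬ (colourGraph χ c).Reachable (inl a₁) (inl a₂))
    (hr' : (colourGraph χ c').Reachable (inl a₁) (inl a₂)) :
    (colourGraph χ c').Preconnected := by
  have h₁₂ := colour_eq_of_not_reachable hc h₂ hr
  have h₂₁ := colour_eq_of_not_reachable hc h₁ fun h => hr h.symm
  have hv : ∀ v, (colourGraph χ c').Reachable v (inl a₁) := by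
    rintro (a | b)
    · rcases fin_two_eq_or_eq hc (χ a b₂) with ha₂ | ha₂
      · rcases fin_two_eq_or_eq hc (χ a b₁) with ha₁ | ha₁
        · exact absurd ((colourGraph_reachable_inl_inl h₁ ha₁).trans
            (colourGraph_reachable_inl_inl ha₂ h₂)) hr
        · exact (colourGraph_reachable_inl_inl ha₁ h₂₁).trans hr'.symm
      · exact colourGraph_reachable_inl_inl ha₂ h₁₂
    · rcases fin_two_eq_or_eq hc (χ a₁ b) with hb₁ | hb₁
      · rcases fin_two_eq_or_eq hc (χ a₂ b) with hb₂ | hb₂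
        · exact absurd (colourGraph_reachable_inl_inl hb₁ hb₂) hr
        · exact (colourGraph_adj_inl_inr hb₂).reachable.symm.trans hr'.symm
      · exact (colourGraph_adj_inl_inr hb₁).reachable.symm
  exact fun v w => (hv v).trans (hv w).symm

/-- The split is given by the `c'`-component of `a₁`. -/
lemma exists_isSplitBy (hc : c' ≠ c) (h₁ : χ a₁ b₁ = c) (h₂ : χ a₂ b₂ = c)
    (hr : ¬ (colourGraph χ c).Reachable (inl a₁) (inl a₂))
    (hr' : ¬ (colourGraph χ c').Reachable (inl a₁) (inl a₂)) :
    ∃ SA SB, IsSplitBy χ c' SA SB ∧ a₁ ∈ SA ∧ a₂ ∉ SA ∧ b₂ ∈ SB ∧ b₁ ∉ SB := by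
  have h₁₂ := colour_eq_of_not_reachable hc h₂ hr
  have h₂₁ := colour_eq_of_not_reachable hc h₁ fun h => hr h.symm
  let R v := (colourGraph χ c').Reachable v (inl a₁)
  refine ⟨{a | R (inl a)}, {b | R (inr b)}, fun a b => ⟨fun hab => ?_, fun hab => ?_⟩,
    Reachable.rfl, fun h => hr' h.symm, (colourGraph_adj_inl_inr h₁₂).reachable.symm,
    fun h => hr' ((colourGraph_adj_inl_inr h₂₁).reachable.trans h).symm⟩
  · have hadj := (colourGraph_adj_inl_inr hab).reachable
    exact ⟨hadj.symm.trans, hadj.trans⟩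
  refine (fin_two_eq_or_eq hc (χ a b)).resolve_left fun habc => ?_
  by_cases ha : R (inl a)
  · have hb : R (inr b) := hab.1 ha
    have hab₁ : χ a b₁ = c := (fin_two_eq_or_eq hc _).resolve_right fun h =>
      hr' (ha.symm.trans (colourGraph_reachable_inl_inl h h₂₁))
    have ha₂b : χ a₂ b = c := (fin_two_eq_or_eq hc _).resolve_right fun h =>
      hr' (hb.symm.trans (colourGraph_adj_inl_inr h).reachable.symm)
    exact hr ((colourGraph_reachable_inl_inl h₁ hab₁).trans
      (colourGraph_reachable_inl_inl habc ha₂b))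
  · have hb : ¬ R (inr b) := fun hb => ha (hab.2 hb)
    have hab₂ : χ a b₂ = c := (fin_two_eq_or_eq hc _).resolve_right fun h =>
      ha (colourGraph_reachable_inl_inl h h₁₂)
    have ha₁b : χ a₁ b = c := (fin_two_eq_or_eq hc _).resolve_right fun h =>
      hb (colourGraph_adj_inl_inr h).reachable.symm
    exact hr ((colourGraph_reachable_inl_inl ha₁b habc).trans
      (colourGraph_reachable_inl_inl hab₂ h₂))

end TwoColours

def ThreeMatchingCover (χ : Fin n → Fin n → Fin r) (c₁ c₂ : Fin r) : Prop :=
  ∃ M₁ M₂ M₃ : CMatching n r χ,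
    M₁.colour = c₁ ∧ M₂.colour = c₂ ∧ M₃.colour = c₂ ∧
    Disjoint M₁.verts M₂.verts ∧ Disjoint M₁.verts M₃.verts ∧
    Disjoint M₂.verts M₃.verts ∧ M₁.verts ∪ M₂.verts ∪ M₃.verts = Set.univ

section Cover

variable {χ : Fin n → Fin n → Fin 2} {c c' : Fin 2}

lemma exists_two_cover_of_forall_card_le (hc : c' ≠ c) {P : Finset (Fin n × Fin n)}
    (hP : IsColourMatching χ c P)
    (hmax : ∀ Q, IsColourMatching χ c Q → #Q ≤ #P)
    (hconn : ∀ p ∈ P, ∀ q ∈ P, (colourGraph χ c).Reachable (inl p.1) (inl q.1)) :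
    ∃ M₁ M₂ : CMatching n 2 χ, M₁.colour ≠ M₂.colour ∧
      Disjoint M₁.verts M₂.verts ∧ M₁.verts ∪ M₂.verts = Set.univ := by
  classical
  have hcard : #(P.image Prod.fst)ᶜ = #(P.image Prod.snd)ᶜ := by
    rw [card_compl, card_compl, card_image_of_injOn hP.2.1, card_image_of_injOn hP.2.2]
  have hcol : ∀ a ∈ (P.image Prod.fst)ᶜ, ∀ b ∈ (P.image Prod.snd)ᶜ, χ a b = c' :=
    fun a ha b hb => (fin_two_eq_or_eq hc _).resolve_left
      (hP.colour_ne_of_forall_card_le hmax (mem_compl.1 ha) (mem_compl.1 hb))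
  obtain ⟨M, hMc, hMv⟩ := exists_cMatching_of_card_eq hcard hcol
  refine ⟨.ofPairs hP hconn, M, hMc ▸ hc.symm, ?_, ?_⟩
  · rw [CMatching.verts_ofPairs, hMv, Set.disjoint_sumEquiv_symm_coe]
    exact ⟨disjoint_compl_right, disjoint_compl_right⟩
  · rw [CMatching.verts_ofPairs, hMv, Set.sumEquiv_symm_union, ← coe_union, ← coe_union,
      union_compl, union_compl, coe_univ, Set.sumEquiv_symm_univ]

lemma IsSplitBy.isSplit {SA SB : Set (Fin n)} {a a' b b' : Fin n} (h : IsSplitBy χ c SA SB)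
    (ha : a ∈ SA) (ha' : a' ∉ SA) (hb : b ∈ SB) (hb' : b' ∉ SB) : IsSplit χ := by
  have hcomp : ∀ c', (∀ K, Nontriv χ c' K) ∧
      Nat.card (colourGraph χ c').ConnectedComponent = 2 := by
    intro c'
    rcases eq_or_ne c' c with rfl | hc
    · exact ⟨h.nontriv ha ha' hb hb', h.card_connectedComponent ha ha' hb hb'⟩
    · have h' := h.compl_right hc
      exact ⟨h'.nontriv ha ha' hb' (not_not.2 hb),
        h'.card_connectedComponent ha ha' hb' (not_not.2 hb)⟩
  exact ⟨fun c => (hcomp c).1, fun c => (hcomp c).2⟩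

lemma IsSplitBy.threeMatchingCover_of_le {SA SB : Finset (Fin n)}
    (h : IsSplitBy χ c ↑SA ↑SB) (hc : c' ≠ c) (hn : n ≤ #SA + #SB) :
    ThreeMatchingCover χ c c' := by
  -- `t = #SA + #SB - n` vertices of each of `SA`, `SB` form the `c`-matching; the rest of `SA`
  -- is matched in colour `c'` to `SBᶜ`, and `SAᶜ` to the rest of `SB`.
  have hA := card_le_univ SA
  have hB := card_le_univ SB
  rw [Fintype.card_fin] at hA hB
  obtain ⟨TA, hTA, hTAc⟩ := exists_subset_card_eq (show #SA + #SB - n ≤ #SA by omega)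
  obtain ⟨TB, hTB, hTBc⟩ := exists_subset_card_eq (show #SA + #SB - n ≤ #SB by omega)
  have h' := h.compl_right hc
  obtain ⟨M₁, hM₁c, hM₁v⟩ := exists_cMatching_of_card_eq (hTAc.trans hTBc.symm)
    fun a ha b hb => (h a b).2 (iff_of_true (hTA ha) (hTB hb))
  obtain ⟨M₂, hM₂c, hM₂v⟩ := exists_cMatching_of_card_eq (s := SA \ TA) (t := SBᶜ)
    (by rw [card_sdiff_of_subset hTA, card_compl, Fintype.card_fin]; omega)
    fun a ha b hb => (h' a b).2 (iff_of_true (mem_sdiff.1 ha).1 (by simpa using hb))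
  obtain ⟨M₃, hM₃c, hM₃v⟩ := exists_cMatching_of_card_eq (s := SAᶜ) (t := SB \ TB)
    (by rw [card_sdiff_of_subset hTB, card_compl, Fintype.card_fin]; omega)
    fun a ha b hb =>
      (h' a b).2 (iff_of_false (by simpa using ha) (by simpa using (mem_sdiff.1 hb).1))
  refine ⟨M₁, M₂, M₃, hM₁c, hM₂c, hM₃c, ?_, ?_, ?_, ?_⟩
  · rw [hM₁v, hM₂v, Set.disjoint_sumEquiv_symm_coe]
    exact ⟨disjoint_sdiff, disjoint_compl_right_iff.2 hTB⟩
  · rw [hM₁v, hM₃v, Set.disjoint_sumEquiv_symm_coe]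
    exact ⟨disjoint_compl_right_iff.2 hTA, disjoint_sdiff⟩
  · rw [hM₂v, hM₃v, Set.disjoint_sumEquiv_symm_coe]
    exact ⟨disjoint_compl_right_iff.2 sdiff_subset, disjoint_compl_left_iff.2 sdiff_subset⟩
  · rw [hM₁v, hM₂v, hM₃v, Set.sumEquiv_symm_union, Set.sumEquiv_symm_union, ← coe_union,
      ← coe_union, ← coe_union, ← coe_union, union_sdiff_of_subset hTA, union_compl,
      union_right_comm, union_sdiff_of_subset hTB, union_compl, coe_univ, Set.sumEquiv_symm_univ]

lemma IsSplitBy.threeMatchingCover {SA SB : Set (Fin n)} (h : IsSplitBy χ c SA SB)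
    {c₁ c₂ : Fin 2} (h₁₂ : c₁ ≠ c₂) : ThreeMatchingCover χ c₁ c₂ := by
  classical
  obtain ⟨SB', h'⟩ : ∃ SB', IsSplitBy χ c₁ SA SB' := by
    rcases eq_or_ne c₁ c with rfl | hc
    · exact ⟨SB, h⟩
    · exact ⟨SBᶜ, h.compl_right hc⟩
  rw [← Set.coe_toFinset SA, ← Set.coe_toFinset SB'] at h'
  by_cases hn : n ≤ #SA.toFinset + #SB'.toFinset
  · exact h'.threeMatchingCover_of_le h₁₂.symm hn
  · refine IsSplitBy.threeMatchingCover_of_le (by simpa only [← coe_compl] using h'.compl)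
      h₁₂.symm ?_
    have hA := card_le_univ SA.toFinset
    have hB := card_le_univ SB'.toFinset
    rw [Fintype.card_fin] at hA hB
    rw [card_compl, card_compl, Fintype.card_fin]
    omega

end Cover

/-- For any 2-edge-colouring of `K_{n,n}`: either two vertex-disjoint
monochromatic connected matchings, one of each colour, span the graph, or the
colouring is split and the graph is spanned both by one matching of the first
colour together with two of the second, and vice versa. -/
theorem two_coloured_matching_cover {n : ℕ} (χ : Fin n → Fin n → Fin 2) :
    (∃ M₁ M₂ : CMatching n 2 χ, M₁.colour ≠ M₂.colour ∧
      Disjoint M₁.verts M₂.verts ∧ M₁.verts ∪ M₂.verts = Set.univ) ∨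
    (IsSplit χ ∧
      ∀ c₁ c₂ : Fin 2, c₁ ≠ c₂ →
        ∃ M₁ M₂ M₃ : CMatching n 2 χ,
          M₁.colour = c₁ ∧ M₂.colour = c₂ ∧ M₃.colour = c₂ ∧
          Disjoint M₁.verts M₂.verts ∧ Disjoint M₁.verts M₃.verts ∧
          Disjoint M₂.verts M₃.verts ∧
          M₁.verts ∪ M₂.verts ∪ M₃.verts = Set.univ) := by
  have h10 : (1 : Fin 2) ≠ 0 := by decide
  obtain ⟨P, hP, hPmax⟩ := exists_isColourMatching_forall_card_le χ 0
  obtain ⟨Q, hQ, hQmax⟩ := exists_isColourMatching_forall_card_le χ 1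
  by_cases hPconn : ∀ p ∈ P, ∀ q ∈ P, (colourGraph χ 0).Reachable (inl p.1) (inl q.1)
  · exact Or.inl (exists_two_cover_of_forall_card_le h10 hP hPmax hPconn)
  by_cases hQconn : ∀ p ∈ Q, ∀ q ∈ Q, (colourGraph χ 1).Reachable (inl p.1) (inl q.1)
  · exact Or.inl (exists_two_cover_of_forall_card_le h10.symm hQ hQmax hQconn)
  push Not at hPconn hQconn
  obtain ⟨p, hp, q, hq, hpq⟩ := hPconn
  obtain ⟨p', -, q', -, hpq'⟩ := hQconn
  have hpq₁ : ¬ (colourGraph χ 1).Reachable (inl p.1) (inl q.1) := fun h =>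
    hpq' (preconnected_of_reachable h10 (hP.1 p hp) (hP.1 q hq) hpq h _ _)
  obtain ⟨SA, SB, hsplit, ha₁, ha₂, hb₂, hb₁⟩ :=
    exists_isSplitBy h10 (hP.1 p hp) (hP.1 q hq) hpq hpq₁
  exact Or.inr ⟨hsplit.isSplit ha₁ ha₂ hb₂ hb₁, fun c₁ c₂ h => hsplit.threeMatchingCover h⟩
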